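/- Suppose u: Λ → ℝ is the pointwise limit of functions u^h as h → 0, each u^h is uniformly bounded by M, uniformly L-Lipschitz in ω in the sup norm, and satisfies |u^h(t,ω) − u^h(t',ω_{·∧t})| ≤ C√(t'−t+h) for t < t'. Then u is bounded by M, L-Lipschitz in ω, and satisfies |u(t,ω) − u(t',ω')| ≤ C' d((t,ω),(t',ω')) for all (t,ω),(t',ω'), where d((t,ω),(t',ω')) = √|t−t'| + ‖ω_{·∧t} − ω'_{·∧t'}‖_T and C' depends only on C and L. -/

import Mathlib

/-!
Non-strict inequalities between the `u^h` pass to the pointwise limit `h → 0⁺`, where the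
defect `h` of the time estimate disappears. The key consequence is that `u t` only sees the path
up to time `t`: the time estimate from `t` to `t' > t`, applied to `ω` and to `ω_{·∧t}` (which
have the same stopped path), bounds `|u t ω - u t ω_{·∧t}|` by `2C√(t' - t)`, and `t' → t⁺`
gives equality; at `t = T` the two paths agree on `[0, T]`. For `t ≤ t'` one then goes from
`(t, ω)` to `(t', ω_{·∧t})` by the time estimate and on to `(t', ω'_{·∧t'})` by the Lipschitz
estimate.
-/

open Filter Topology

theorem abs_sub_le_of_tendsto {α : Type*} {l : Filter α} [l.NeBot] {f g k : α → ℝ}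
    {a b c : ℝ} (hf : Tendsto f l (𝓝 a)) (hg : Tendsto g l (𝓝 b)) (hk : Tendsto k l (𝓝 c))
    (h : ∀ᶠ x in l, |f x - g x| ≤ k x) : |a - b| ≤ c :=
  le_of_tendsto_of_tendsto (hf.sub hg).abs hk h

namespace PathFunctional

variable {E : Type*}

def stopped (t : ℝ) (ω : ℝ → E) : ℝ → E := fun s => ω (min s t)

theorem stopped_stopped_of_le {t t' : ℝ} (h : t ≤ t') (ω : ℝ → E) :
    stopped t' (stopped t ω) = stopped t ω := by
  funext s
  simp only [stopped, min_assoc, min_eq_right h]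

def HalfHolderInTime (T C h : ℝ) (v : ℝ → (ℝ → E) → ℝ) : Prop :=
  ∀ t t', 0 ≤ t → t < t' → t' ≤ T → ∀ ω,
    |v t ω - v t' (stopped t ω)| ≤ C * √(t' - t + h)

theorem HalfHolderInTime.of_tendsto {T C : ℝ} {uh : ℝ → ℝ → (ℝ → E) → ℝ}
    {u : ℝ → (ℝ → E) → ℝ} (hlim : ∀ t ω, Tendsto (fun h => uh h t ω) (𝓝[>] 0) (𝓝 (u t ω)))
    (htime : ∀ h ∈ Set.Ioi (0 : ℝ), HalfHolderInTime T C h (uh h)) :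
    HalfHolderInTime T C 0 u := by
  intro t t' ht htt' ht'T ω
  have hdefect : Tendsto (fun h => C * √(t' - t + h)) (𝓝[>] 0) (𝓝 (C * √(t' - t + 0))) :=
    ((continuous_const.add continuous_id).sqrt.const_mul C).continuousAt.tendsto.mono_left
      nhdsWithin_le_nhds
  exact abs_sub_le_of_tendsto (hlim t ω) (hlim t' (stopped t ω)) hdefect
    (eventually_nhdsWithin_of_forall fun h hh => htime h hh t t' ht htt' ht'T ω)

variable [SeminormedAddCommGroup E]

/-- As a real `⨆`, this is `0` (not `∞`) when `‖ω₁ - ω₂‖` is unbounded on `[0, T]`. -/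
noncomputable def supDist (T : ℝ) (ω₁ ω₂ : ℝ → E) : ℝ :=
  ⨆ s : Set.Icc (0 : ℝ) T, ‖ω₁ s - ω₂ s‖

theorem supDist_nonneg (T : ℝ) (ω₁ ω₂ : ℝ → E) : 0 ≤ supDist T ω₁ ω₂ :=
  Real.iSup_nonneg fun _ => norm_nonneg _

theorem supDist_comm (T : ℝ) (ω₁ ω₂ : ℝ → E) : supDist T ω₁ ω₂ = supDist T ω₂ ω₁ :=
  iSup_congr fun _ => norm_sub_rev _ _

theorem supDist_stopped_self (T : ℝ) (ω : ℝ → E) : supDist T ω (stopped T ω) = 0 := by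
  have hzero : ∀ s : Set.Icc (0 : ℝ) T, ‖ω s - stopped T ω s‖ = 0 := fun s => by
    simp [stopped, min_eq_left s.2.2]
  rw [supDist, iSup_congr hzero, Real.iSup_const_zero]

noncomputable def parabolicDist (T t t' : ℝ) (ω ω' : ℝ → E) : ℝ :=
  √|t - t'| + supDist T (stopped t ω) (stopped t' ω')

theorem parabolicDist_comm (T t t' : ℝ) (ω ω' : ℝ → E) :
    parabolicDist T t t' ω ω' = parabolicDist T t' t ω' ω := by
  rw [parabolicDist, parabolicDist, abs_sub_comm, supDist_comm]

def LipschitzInPath (T L : ℝ) (v : ℝ → (ℝ → E) → ℝ) : Prop :=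
  ∀ t ω₁ ω₂, |v t ω₁ - v t ω₂| ≤ L * supDist T ω₁ ω₂

theorem LipschitzInPath.of_tendsto {T L : ℝ} {uh : ℝ → ℝ → (ℝ → E) → ℝ}
    {u : ℝ → (ℝ → E) → ℝ} (hlim : ∀ t ω, Tendsto (fun h => uh h t ω) (𝓝[>] 0) (𝓝 (u t ω)))
    (hlip : ∀ h ∈ Set.Ioi (0 : ℝ), LipschitzInPath T L (uh h)) : LipschitzInPath T L u :=
  fun t ω₁ ω₂ => abs_sub_le_of_tendsto (hlim t ω₁) (hlim t ω₂) tendsto_const_nhds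
    (eventually_nhdsWithin_of_forall fun h hh => hlip h hh t ω₁ ω₂)

section Regularity

variable {T L C : ℝ} {u : ℝ → (ℝ → E) → ℝ}

theorem apply_stopped_eq (hlip : LipschitzInPath T L u) (htime : HalfHolderInTime T C 0 u)
    {t : ℝ} (ht : 0 ≤ t) (htT : t ≤ T) (ω : ℝ → E) : u t (stopped t ω) = u t ω := by
  rw [eq_comm, ← sub_eq_zero, ← abs_nonpos_iff]
  rcases htT.lt_or_eq with hlt | rfl
  · have hgap : ∀ t' ∈ Set.Ioo t T,
        |u t ω - u t (stopped t ω)| ≤ 2 * C * √(t' - t) := by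
      intro t' ⟨htt', ht'T⟩
      have hω := htime t t' ht htt' ht'T.le ω
      have hstopped := htime t t' ht htt' ht'T.le (stopped t ω)
      rw [stopped_stopped_of_le le_rfl] at hstopped
      rw [add_zero] at hω hstopped
      linarith [abs_sub_le (u t ω) (u t' (stopped t ω)) (u t (stopped t ω)),
        abs_sub_comm (u t' (stopped t ω)) (u t (stopped t ω))]
    have hlim : Tendsto (fun t' => 2 * C * √(t' - t)) (𝓝[>] t) (𝓝 0) := by
      have hcont : Continuous fun t' : ℝ => 2 * C * √(t' - t) := by fun_prop
      simpa using (hcont.tendsto t).mono_left nhdsWithin_le_nhds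
    exact ge_of_tendsto hlim (mem_of_superset (Ioo_mem_nhdsGT hlt) hgap)
  · simpa [supDist_stopped_self] using hlip t ω (stopped t ω)

theorem abs_sub_le_mul_parabolicDist_of_le (hlip : LipschitzInPath T L u)
    (htime : HalfHolderInTime T C 0 u) (hC : 0 ≤ C) (hL : 0 ≤ L) {t t' : ℝ} (ht : 0 ≤ t)
    (htt' : t ≤ t') (ht'T : t' ≤ T) (ω ω' : ℝ → E) :
    |u t ω - u t' ω'| ≤ (C + L + 1) * parabolicDist T t t' ω ω' := by
  have htime_le : |u t ω - u t' (stopped t ω)| ≤ C * √(t' - t) := by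
    rcases htt'.lt_or_eq with htt' | rfl
    · simpa using htime t t' ht htt' ht'T ω
    · simp [apply_stopped_eq hlip htime ht ht'T]
  have hspace :
      |u t' (stopped t ω) - u t' ω'| ≤ L * supDist T (stopped t ω) (stopped t' ω') := by
    rw [← apply_stopped_eq hlip htime (ht.trans htt') ht'T ω']
    exact hlip t' _ _
  have habs : |t - t'| = t' - t := by rw [abs_sub_comm, abs_of_nonneg (sub_nonneg.2 htt')]
  calc |u t ω - u t' ω'|
      ≤ C * √(t' - t) + L * supDist T (stopped t ω) (stopped t' ω') :=
        (abs_sub_le _ _ _).trans (add_le_add htime_le hspace)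
    _ ≤ (C + L + 1) * parabolicDist T t t' ω ω' := by
        rw [parabolicDist, habs]
        nlinarith [Real.sqrt_nonneg (t' - t), supDist_nonneg T (stopped t ω) (stopped t' ω')]

theorem abs_sub_le_mul_parabolicDist (hlip : LipschitzInPath T L u)
    (htime : HalfHolderInTime T C 0 u) (hC : 0 ≤ C) (hL : 0 ≤ L) {t t' : ℝ} (ht : 0 ≤ t)
    (htT : t ≤ T) (ht' : 0 ≤ t') (ht'T : t' ≤ T) (ω ω' : ℝ → E) :
    |u t ω - u t' ω'| ≤ (C + L + 1) * parabolicDist T t t' ω ω' := by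
  rcases le_total t t' with htt' | ht't
  · exact abs_sub_le_mul_parabolicDist_of_le hlip htime hC hL ht htt' ht'T ω ω'
  · rw [abs_sub_comm, parabolicDist_comm]
    exact abs_sub_le_mul_parabolicDist_of_le hlip htime hC hL ht' ht't htT ω' ω

end Regularity

end PathFunctional

open PathFunctional in
theorem stmt_18_general (d : ℕ) (T M L C : ℝ)
    (hL : 0 ≤ L) (hC : 0 ≤ C)
    (uh : ℝ → ℝ → (ℝ → EuclideanSpace ℝ (Fin d)) → ℝ)
    (u : ℝ → (ℝ → EuclideanSpace ℝ (Fin d)) → ℝ)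
    (hlim : ∀ (t : ℝ) (ω : ℝ → EuclideanSpace ℝ (Fin d)),
      Tendsto (fun h => uh h t ω) (nhdsWithin 0 (Set.Ioi 0)) (nhds (u t ω)))
    (hbd : ∀ h ∈ Set.Ioi (0:ℝ), ∀ t ω, |uh h t ω| ≤ M)
    (hlip : ∀ h ∈ Set.Ioi (0:ℝ), ∀ (t : ℝ) (ω1 ω2 : ℝ → EuclideanSpace ℝ (Fin d)),
      |uh h t ω1 - uh h t ω2| ≤ L * ⨆ s : Set.Icc (0:ℝ) T, ‖ω1 s - ω2 s‖)
    (htime : ∀ h ∈ Set.Ioi (0:ℝ), ∀ (t t' : ℝ), 0 ≤ t → t < t' → t' ≤ T →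
      ∀ ω : ℝ → EuclideanSpace ℝ (Fin d),
        |uh h t ω - uh h t' (fun s => ω (min s t))| ≤ C * Real.sqrt (t' - t + h)) :
    (∀ t ω, |u t ω| ≤ M) ∧
    (∀ (t : ℝ) (ω1 ω2 : ℝ → EuclideanSpace ℝ (Fin d)),
      |u t ω1 - u t ω2| ≤ L * ⨆ s : Set.Icc (0:ℝ) T, ‖ω1 s - ω2 s‖) ∧
    (∃ C' : ℝ, 0 < C' ∧
      ∀ (t t' : ℝ) (ω ω' : ℝ → EuclideanSpace ℝ (Fin d)),
        0 ≤ t → t ≤ T → 0 ≤ t' → t' ≤ T →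
        |u t ω - u t' ω'| ≤ C' * (Real.sqrt |t - t'| +
          ⨆ s : Set.Icc (0:ℝ) T, ‖ω (min (s:ℝ) t) - ω' (min (s:ℝ) t')‖)) := by
  have hlipu : LipschitzInPath T L u := LipschitzInPath.of_tendsto hlim hlip
  have htimeu : HalfHolderInTime T C 0 u := HalfHolderInTime.of_tendsto hlim htime
  refine ⟨fun t ω => le_of_tendsto (hlim t ω).abs
      (eventually_nhdsWithin_of_forall fun h hh => hbd h hh t ω), hlipu, C + L + 1,
    by linarith, fun t t' ω ω' ht htT ht' ht'T => ?_⟩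
  exact abs_sub_le_mul_parabolicDist hlipu htimeu hC hL ht htT ht' ht'T ω ω'

/-- Transfer of uniform regularity from the approximations `u^h` to the limit
`u` (conclusion (4.14)): uniform bounds, uniform space-Lipschitz continuity and
the uniform `√(t'−t+h)` time regularity pass to the pointwise limit `u`, which
is then Lipschitz with respect to the pseudometric
`d((t,ω),(t',ω')) = √|t−t'| + ‖ω_{·∧t} − ω'_{·∧t'}‖_T`. -/
theorem stmt_18 (d : ℕ) (T M L C : ℝ) (hT : 0 < T)
    (hM : 0 ≤ M) (hL : 0 ≤ L) (hC : 0 ≤ C)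
    (uh : ℝ → ℝ → (ℝ → EuclideanSpace ℝ (Fin d)) → ℝ)
    (u : ℝ → (ℝ → EuclideanSpace ℝ (Fin d)) → ℝ)
    (hlim : ∀ (t : ℝ) (ω : ℝ → EuclideanSpace ℝ (Fin d)),
      Tendsto (fun h => uh h t ω) (nhdsWithin 0 (Set.Ioi 0)) (nhds (u t ω)))
    (hbd : ∀ h ∈ Set.Ioi (0:ℝ), ∀ t ω, |uh h t ω| ≤ M)
    (hlip : ∀ h ∈ Set.Ioi (0:ℝ), ∀ (t : ℝ) (ω1 ω2 : ℝ → EuclideanSpace ℝ (Fin d)),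
      |uh h t ω1 - uh h t ω2| ≤ L * ⨆ s : Set.Icc (0:ℝ) T, ‖ω1 s - ω2 s‖)
    (htime : ∀ h ∈ Set.Ioi (0:ℝ), ∀ (t t' : ℝ), 0 ≤ t → t < t' → t' ≤ T →
      ∀ ω : ℝ → EuclideanSpace ℝ (Fin d),
        |uh h t ω - uh h t' (fun s => ω (min s t))| ≤ C * Real.sqrt (t' - t + h)) :
    (∀ t ω, |u t ω| ≤ M) ∧
    (∀ (t : ℝ) (ω1 ω2 : ℝ → EuclideanSpace ℝ (Fin d)),
      |u t ω1 - u t ω2| ≤ L * ⨆ s : Set.Icc (0:ℝ) T, ‖ω1 s - ω2 s‖) ∧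
    (∃ C' : ℝ, 0 < C' ∧
      ∀ (t t' : ℝ) (ω ω' : ℝ → EuclideanSpace ℝ (Fin d)),
        0 ≤ t → t ≤ T → 0 ≤ t' → t' ≤ T →
        |u t ω - u t' ω'| ≤ C' * (Real.sqrt |t - t'| +
          ⨆ s : Set.Icc (0:ℝ) T, ‖ω (min (s:ℝ) t) - ω' (min (s:ℝ) t')‖)) :=
  stmt_18_general d T M L C hL hC uh u hlim hbd hlip htime
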